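/- Suppose the root of the formula φ is a cycle vertex, the variable p does not occur in φ, and p is modalised in the formula ψ. Then: (i) c(snip(φ,p)) < c(φ); (ii) Ϝp.snip(φ,p) ≅ φ (isomorphism of graphs); (iii) snip(φ,φ) ≃ φ; (iv) Ϝp.ψ ≃ ψ[p:Ϝp.ψ]. -/

import Mathlib

/-!
Cyclic syntax for Cyclic Henkin Logic (Visser, "Cyclic Henkin Logic").

A graph is a directed pointed labeled graph with ordered successors;
formulas of the cyclic modal language `𝕃°` are such graphs over the
modal labels, whose box-occurrences guard all cycles.
-/


theorem finite_option {α : Type} (h : Finite α) : Finite (Option α) := by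
  haveI := h
  haveI : Fintype α := Fintype.ofFinite _
  exact Finite.of_fintype _

/-- Directed pointed labeled graphs with ordered successors over a label
set `L` with arity function `ar`.  The vertex set is finite. -/
structure RGraph (L : Type) (ar : L → ℕ) : Type 1 where
  V : Type
  fin : Finite V
  root : V
  label : V → L
  succ : (a : V) → Fin (ar (label a)) → V

namespace RGraph

variable {L : Type} {ar : L → ℕ}

/-- The edge relation `a Ŝ b`. -/
def Edge (G : RGraph L ar) (a b : G.V) : Prop := ∃ i, G.succ a i = b

/-- Every vertex is reachable from the root by a finite path. -/
def Reachable (G : RGraph L ar) : Prop :=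
  ∀ a, Relation.ReflTransGen G.Edge G.root a

/-- `C` is a cycle: its elements can be arranged in a closed path of
pairwise distinct vertices. -/
def IsCycle (G : RGraph L ar) (C : Set G.V) : Prop :=
  ∃ (k : ℕ) (f : Fin (k + 1) → G.V), Function.Injective f ∧ Set.range f = C ∧
    (∀ i : Fin k, G.Edge (f i.castSucc) (f i.succ)) ∧ G.Edge (f (Fin.last k)) (f 0)

/-- A guard: a set of vertices meeting every cycle. -/
def IsGuard (G : RGraph L ar) (W : Set G.V) : Prop :=
  ∀ C, G.IsCycle C → (C ∩ W).Nonempty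

/-- The number of cycles `c(G)`. -/
noncomputable def numCycles (G : RGraph L ar) : ℕ :=
  Set.ncard {C : Set G.V | G.IsCycle C}

/-- A vertex on a cycle. -/
def OnCycle (G : RGraph L ar) (a : G.V) : Prop := ∃ C, G.IsCycle C ∧ a ∈ C

/-- The root is a cycle vertex. -/
def RootOnCycle (G : RGraph L ar) : Prop := G.OnCycle G.root

/-- Acyclic graphs. -/
def Acyclic (G : RGraph L ar) : Prop := ∀ C, ¬ G.IsCycle C

/-- Bisimulations between graphs. -/
def IsBisim (G G' : RGraph L ar) (R : G.V → G'.V → Prop) : Prop :=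
  ∀ a a', R a a' → ∃ h : G.label a = G'.label a',
    ∀ i : Fin (ar (G.label a)),
      R (G.succ a i) (G'.succ a' (Fin.cast (congrArg ar h) i))

/-- Bisimilarity `G ≃ G'`: some bisimulation relates the roots. -/
def Bisim (G G' : RGraph L ar) : Prop :=
  ∃ R, G.IsBisim G' R ∧ R G.root G'.root

/-- Isomorphism `G ≅ G'`: a bijective bisimulation relating the roots. -/
def Iso (G G' : RGraph L ar) : Prop :=
  ∃ e : G.V ≃ G'.V, G.IsBisim G' (fun a b => e a = b) ∧ e G.root = G'.root

end RGraph

/-- Labels for the cyclic modal language `𝕃°`. -/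
inductive FLab : Type
  | top | bot | var (n : ℕ) | neg | box | and | or | imp
deriving DecidableEq

/-- Arities of the labels. -/
@[reducible] def FLab.ar : FLab → ℕ
  | .top => 0 | .bot => 0 | .var _ => 0
  | .neg => 1 | .box => 1
  | .and => 2 | .or => 2 | .imp => 2

/-- Raw formulas of `𝕃°`: graphs over the modal labels. -/
abbrev Fm := RGraph FLab FLab.ar

namespace Fm

/-- `p` occurs in `φ`. -/
def Occurs (φ : Fm) (p : ℕ) : Prop := ∃ a, φ.label a = .var p

/-- The set `bo(φ)` of box-occurrences. -/
def boOcc (φ : Fm) : Set φ.V := {a | φ.label a = .box}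

/-- The guard condition: every cycle contains a box-occurrence. -/
def Guarded (φ : Fm) : Prop := φ.IsGuard φ.boOcc

/-- `φ` is a formula: a (rooted, reachable) graph whose box-occurrences
form a guard. -/
def WF (φ : Fm) : Prop := φ.Reachable ∧ φ.Guarded

/-- An edge leaving a non-box vertex. -/
def EdgeNB (φ : Fm) (a b : φ.V) : Prop := φ.Edge a b ∧ φ.label a ≠ .box

/-- `φ` is modalised in `p`: every path from the root to a `p`-occurrence
passes through a box-occurrence. -/
def Modalised (φ : Fm) (p : ℕ) : Prop :=
  ∀ a, Relation.ReflTransGen φ.EdgeNB φ.root a → φ.label a ≠ .var p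

theorem Modalised.root_ne {φ : Fm} {p : ℕ} (h : φ.Modalised p) :
    φ.label φ.root ≠ .var p :=
  h φ.root Relation.ReflTransGen.refl

/-! ### Operations on formulas -/

/-- One-point graph with a 0-ary label. -/
def ofLab0 (l : FLab) : Fm where
  V := PUnit
  fin := inferInstance
  root := .unit
  label := fun _ => l
  succ := fun _ _ => .unit

def topFm : Fm := ofLab0 .top
def botFm : Fm := ofLab0 .bot
def varFm (n : ℕ) : Fm := ofLab0 (.var n)

def lab1 (l : FLab) (φ : Fm) : Option φ.V → FLab
  | none => l
  | some a => φ.label a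

/-- Add a fresh root with 1-ary label `l` above `φ`. -/
def ofLab1 (l : FLab) (φ : Fm) : Fm where
  V := Option φ.V
  fin := finite_option φ.fin
  root := none
  label := lab1 l φ
  succ := fun a => match a with
    | none => fun _ => some φ.root
    | some b => fun i => some (φ.succ b i)

def neg (φ : Fm) : Fm := ofLab1 .neg φ
def box (φ : Fm) : Fm := ofLab1 .box φ

def lab2 (l : FLab) (φ ψ : Fm) : Option (φ.V ⊕ ψ.V) → FLab
  | none => l
  | some (.inl a) => φ.label a
  | some (.inr b) => ψ.label b

/-- Add a fresh root with 2-ary label `l` above the disjoint sum of `φ`, `ψ`. -/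
def ofLab2 (l : FLab) (φ ψ : Fm) : Fm where
  V := Option (φ.V ⊕ ψ.V)
  fin := finite_option (by haveI := φ.fin; haveI := ψ.fin; exact inferInstance)
  root := none
  label := lab2 l φ ψ
  succ := fun a => match a with
    | none => fun i => if (i : ℕ) = 0 then some (.inl φ.root) else some (.inr ψ.root)
    | some (.inl a) => fun i => some (.inl (φ.succ a i))
    | some (.inr b) => fun i => some (.inr (ψ.succ b i))

def and (φ ψ : Fm) : Fm := ofLab2 .and φ ψ
def or (φ ψ : Fm) : Fm := ofLab2 .or φ ψ
def imp (φ ψ : Fm) : Fm := ofLab2 .imp φ ψ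

/-- `φ ↔ ψ` as `(φ→ψ) ∧ (ψ→φ)`. -/
def iff (φ ψ : Fm) : Fm := Fm.and (Fm.imp φ ψ) (Fm.imp ψ φ)

/-- The fixed point `Ϝp.φ`: identify the root with all `p`-occurrences,
keeping the label of the root.  (The root is not a `p`-occurrence, e.g.
because `φ` is modalised in `p`.) -/
def fix (φ : Fm) (p : ℕ) (h : φ.label φ.root ≠ .var p) : Fm where
  V := {a : φ.V // φ.label a ≠ .var p}
  fin := by haveI := φ.fin; exact inferInstance
  root := ⟨φ.root, h⟩
  label := fun a => φ.label a.1
  succ := fun a i =>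
    if hb : φ.label (φ.succ a.1 i) = .var p then ⟨φ.root, h⟩
    else ⟨φ.succ a.1 i, hb⟩

/-! ### Substitution -/

def varIdx : FLab → Option ℕ
  | .var q => some q
  | _ => none

/-- The copy of `σ q` hanging at a `q`-occurrence. -/
def copyT (σ : ℕ → Fm) : Option ℕ → Type
  | some q => (σ q).V
  | none => PUnit

theorem copyT_finite (σ : ℕ → Fm) : ∀ o, Finite (copyT σ o)
  | some q => (σ q).fin
  | none => show Finite PUnit from inferInstance

def copyRoot (σ : ℕ → Fm) : ∀ o, copyT σ o
  | some q => (σ q).root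
  | none => .unit

def copyLabel (σ : ℕ → Fm) (d : FLab) : ∀ o, copyT σ o → FLab
  | some q, b => (σ q).label b
  | none, _ => d

/-- Vertices of the substitution `φσ`. -/
def SubV (φ : Fm) (σ : ℕ → Fm) : Type :=
  Σ a : φ.V, copyT σ (varIdx (φ.label a))

def substSucc (φ : Fm) (σ : ℕ → Fm) (a : φ.V) :
    ∀ (o : Option ℕ), o = varIdx (φ.label a) → ∀ b : copyT σ o,
      Fin (copyLabel σ (φ.label a) o b).ar → SubV φ σ
  | some q, h, b, i => ⟨a, cast (congrArg (copyT σ) h) ((σ q).succ b i)⟩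
  | none, _, _, i => ⟨φ.succ a i, copyRoot σ _⟩

/-- Simultaneous substitution: every `q`-occurrence of `φ` is identified
with the root of a disjoint copy of `σ q`, keeping the label of the root
of `σ q`. -/
def subst (φ : Fm) (σ : ℕ → Fm) : Fm where
  V := SubV φ σ
  fin := by
    haveI := φ.fin
    haveI : ∀ a : φ.V, Finite (copyT σ (varIdx (φ.label a))) :=
      fun a => copyT_finite σ _
    exact (inferInstance : Finite (Σ a : φ.V, copyT σ (varIdx (φ.label a))))
  root := ⟨φ.root, copyRoot σ _⟩
  label := fun x => copyLabel σ (φ.label x.1) _ x.2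
  succ := fun x => substSucc φ σ x.1 _ rfl x.2

/-- Substitution of a single variable, `φ[p:ψ]`. -/
def subst1 (φ : Fm) (p : ℕ) (ψ : Fm) : Fm :=
  φ.subst (fun q => if q = p then ψ else varFm q)

/-! ### Snip -/

-- Redirect all incoming edges of the root to a new leaf labeled `p`.
open Classical in
noncomputable def snipC (φ : Fm) (p : ℕ) : Fm where
  V := Option φ.V
  fin := finite_option φ.fin
  root := some φ.root
  label := lab1 (.var p) φ
  succ := fun a => match a with
    | none => Fin.elim0
    | some a => fun i =>
        if φ.succ a i = φ.root then none else some (φ.succ a i)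

-- `snip(φ,p)`: if the root is on a cycle, redirect all incoming edges
-- of the root to a new leaf labeled `p`; otherwise `φ` itself.
open Classical in
noncomputable def snip (φ : Fm) (p : ℕ) : Fm :=
  if φ.RootOnCycle then φ.snipC p else φ

/-- `snip(φ,ψ) := snip(φ,p)[p:ψ]` (for a variable `p` not occurring in `φ`). -/
noncomputable def snipF (φ : Fm) (p : ℕ) (ψ : Fm) : Fm :=
  (φ.snip p).subst1 p ψ

theorem snip_root_ne {φ : Fm} {p : ℕ} (h : φ.RootOnCycle) (hp : ¬ φ.Occurs p) :
    (φ.snip p).label (φ.snip p).root ≠ .var p := by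
  rw [snip, if_pos h]
  exact fun hc => hp ⟨φ.root, hc⟩

/-! ### The transitive closure modality `□•φ := Ϝp.□(φ∧p)` -/

def bslab (φ : Fm) : Option (Option φ.V) → FLab
  | none => .box
  | some none => .and
  | some (some a) => φ.label a

/-- `□•φ := Ϝp.□(φ∧p)`, for `p` not occurring in `φ`: a box-root whose
`∧`-successor returns to the box-root. -/
def boxStar (φ : Fm) : Fm where
  V := Option (Option φ.V)
  fin := finite_option (finite_option φ.fin)
  root := none
  label := bslab φ
  succ := fun a => match a with
    | none => fun _ => some none
    | some none => fun i => if (i : ℕ) = 0 then some (some φ.root) else none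
    | some (some a) => fun i => some (some (φ.succ a i))

/-- `⊡•φ := φ ∧ □•φ`. -/
def boxDotStar (φ : Fm) : Fm := Fm.and φ (boxStar φ)

/-- Finite conjunctions. -/
def bigAnd : List Fm → Fm
  | [] => topFm
  | φ :: l => Fm.and φ (bigAnd l)

/-- Apply a label, as a connective, to arguments. -/
def applyLab : (l : FLab) → (Fin l.ar → Fm) → Fm
  | .top, _ => topFm
  | .bot, _ => botFm
  | .var n, _ => varFm n
  | .neg, f => neg (f 0)
  | .box, f => box (f 0)
  | .and, f => Fm.and (f 0) (f 1)
  | .or, f => Fm.or (f 0) (f 1)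
  | .imp, f => Fm.imp (f 0) (f 1)

/-- First successor (defaulting to `a` itself at leaves). -/
def succ0 (φ : Fm) (a : φ.V) : φ.V :=
  if h : 0 < (φ.label a).ar then φ.succ a ⟨0, h⟩ else a

/-- The subgraph of `φ` generated by `a`. -/
def restrict (φ : Fm) (a : φ.V) : Fm where
  V := {b : φ.V // Relation.ReflTransGen φ.Edge a b}
  fin := by haveI := φ.fin; exact inferInstance
  root := ⟨a, Relation.ReflTransGen.refl⟩
  label := fun b => φ.label b.1
  succ := fun b i => ⟨φ.succ b.1 i, b.2.tail ⟨i, rfl⟩⟩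

/-- A variable not occurring in `φ`. -/
noncomputable def freshVar (φ : Fm) : ℕ := by
  classical
  haveI := φ.fin
  haveI : Fintype φ.V := Fintype.ofFinite _
  exact Finset.univ.sup fun a => match φ.label a with | .var q => q + 1 | _ => 0

/-- `snip(φ,⊤)`. -/
noncomputable def snipTop (φ : Fm) : Fm := φ.snipF φ.freshVar topFm

/-- The list of box-occurrences of `φ`. -/
noncomputable def boxOccList (φ : Fm) : List φ.V := by
  classical
  haveI := φ.fin
  haveI : Fintype φ.V := Fintype.ofFinite _
  exact (Finset.univ.filter fun a => φ.label a = FLab.box).toList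

end Fm

/-! ### Propositional tautologies (as parse trees) -/

inductive PForm : Type
  | var (n : ℕ) | top | bot
  | neg (A : PForm) | and (A B : PForm) | or (A B : PForm) | imp (A B : PForm)

def PForm.eval (v : ℕ → Bool) : PForm → Bool
  | .var n => v n
  | .top => true
  | .bot => false
  | .neg A => !A.eval v
  | .and A B => A.eval v && B.eval v
  | .or A B => A.eval v || B.eval v
  | .imp A B => !A.eval v || B.eval v

/-- Propositional tautology. -/
def PForm.Taut (A : PForm) : Prop := ∀ v, A.eval v = true

/-- Substitution instance of a parse tree by formulas of `𝕃°`. -/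
def PForm.substFm (σ : ℕ → Fm) : PForm → Fm
  | .var n => σ n
  | .top => Fm.topFm
  | .bot => Fm.botFm
  | .neg A => Fm.neg (A.substFm σ)
  | .and A B => Fm.and (A.substFm σ) (B.substFm σ)
  | .or A B => Fm.or (A.substFm σ) (B.substFm σ)
  | .imp A B => Fm.imp (A.substFm σ) (B.substFm σ)

/-! ### Cyclic Henkin Logic -/

/-- Cyclic Henkin Logic `CHL`: modus ponens, necessitation, substitution
instances of propositional tautologies, distribution, bisimilarity, and
Löb's Rule. -/
inductive CHL : Fm → Prop
  | mp {φ ψ : Fm} : CHL (Fm.imp φ ψ) → CHL φ → CHL ψ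
  | nec {φ : Fm} : CHL φ → CHL (Fm.box φ)
  | taut {A : PForm} (σ : ℕ → Fm) : A.Taut → CHL (A.substFm σ)
  | k (φ ψ : Fm) : CHL (Fm.imp (Fm.box (Fm.imp φ ψ)) (Fm.imp (Fm.box φ) (Fm.box ψ)))
  | bisim {φ ψ : Fm} : RGraph.Bisim φ ψ → CHL (Fm.iff φ ψ)
  | lob {φ : Fm} : CHL (Fm.imp (Fm.box φ) φ) → CHL φ

/-- `GL°`: `CHL` plus the axiom scheme `□φ → □□φ`. -/
inductive GLo : Fm → Prop
  | mp {φ ψ : Fm} : GLo (Fm.imp φ ψ) → GLo φ → GLo ψ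
  | nec {φ : Fm} : GLo φ → GLo (Fm.box φ)
  | taut {A : PForm} (σ : ℕ → Fm) : A.Taut → GLo (A.substFm σ)
  | k (φ ψ : Fm) : GLo (Fm.imp (Fm.box (Fm.imp φ ψ)) (Fm.imp (Fm.box φ) (Fm.box ψ)))
  | bisim {φ ψ : Fm} : RGraph.Bisim φ ψ → GLo (Fm.iff φ ψ)
  | lob {φ : Fm} : GLo (Fm.imp (Fm.box φ) φ) → GLo φ
  | four (φ : Fm) : GLo (Fm.imp (Fm.box φ) (Fm.box (Fm.box φ)))

/-- Löb's Logic `GL` on the acyclic formulas. -/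
inductive GLlogic : Fm → Prop
  | mp {φ ψ : Fm} : GLlogic (Fm.imp φ ψ) → GLlogic φ → GLlogic ψ
  | nec {φ : Fm} : GLlogic φ → GLlogic (Fm.box φ)
  | taut {A : PForm} (σ : ℕ → Fm) : (∀ q, (σ q).Acyclic) → A.Taut → GLlogic (A.substFm σ)
  | k (φ ψ : Fm) : φ.Acyclic → ψ.Acyclic →
      GLlogic (Fm.imp (Fm.box (Fm.imp φ ψ)) (Fm.imp (Fm.box φ) (Fm.box ψ)))
  | bisim {φ ψ : Fm} : φ.Acyclic → ψ.Acyclic → RGraph.Bisim φ ψ → GLlogic (Fm.iff φ ψ)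
  | lob {φ : Fm} : φ.Acyclic → GLlogic (Fm.imp (Fm.box φ) φ) → GLlogic φ
  | four (φ : Fm) : φ.Acyclic → GLlogic (Fm.imp (Fm.box φ) (Fm.box (Fm.box φ)))

/-! ### Systems of equations -/

/-- The system `ℰ` (given by `E` on the finite variable set `Q`) is
modalised: its dependency graph is acyclic. -/
def SysModalised (Q : Finset ℕ) (E : ℕ → Fm) : Prop :=
  ∀ q ∈ Q, ¬ Relation.TransGen
      (fun x y => x ∈ Q ∧ y ∈ Q ∧ ¬ (E x).Modalised y) q q

/-- The substitution determined by a solution candidate `F` on `Q`. -/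
def sysSubst (Q : Finset ℕ) (F : ℕ → Fm) : ℕ → Fm :=
  fun q => if q ∈ Q then F q else Fm.varFm q

/-- `F` solves the system `E` on `Q`. -/
def IsSolution (Q : Finset ℕ) (E : ℕ → Fm) (F : ℕ → Fm) : Prop :=
  (∀ q ∈ Q, (F q).WF) ∧
  (∀ q ∈ Q, ∀ q' ∈ Q, ¬ (F q).Occurs q') ∧
  (∀ q ∈ Q, RGraph.Bisim (F q) ((E q).subst (sysSubst Q F)))

/-! ### Local translations -/

/-- A local translation of the formula `φ` into the logic `Λ`. -/
def IsLocalTranslation (Λ : Fm → Prop) (φ : Fm) (T : φ.V → Fm) : Prop :=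
  ∀ a : φ.V, Λ (Fm.iff (T a) (Fm.applyLab (φ.label a) (fun i => T (φ.succ a i))))

-- Substitution determined by a finite assignment.
open Classical in
noncomputable def substOf {ι : Type} (s : ι → ℕ) (ψ : ι → Fm) : ℕ → Fm :=
  fun q => if h : ∃ i, s i = q then ψ h.choose else Fm.varFm q

/-- The characterising equations of the de Jongh–Sambin map `js*`,
defined by course-of-values recursion on the number of cycles and guard
recursion on the box-occurrences on a cycle. -/
def IsJsStar (jsS : (φ : Fm) → φ.V → Fm) : Prop :=
  (∀ (φ : Fm) (a : φ.V), ¬ (φ.label a = .box ∧ φ.OnCycle a) →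
      jsS φ a = Fm.applyLab (φ.label a) (fun i => jsS φ (φ.succ a i))) ∧
  (∀ (φ : Fm) (a : φ.V), φ.label a = .box → φ.OnCycle a →
      jsS φ a = jsS (Fm.snipTop (φ.restrict a)) (Fm.snipTop (φ.restrict a)).root) ∧
  (∀ (φ : Fm) (a : φ.V), (jsS φ a).Acyclic)

/-! ### Auxiliary lemmas for `snip_fix_props` -/

namespace RGraph
variable {L : Type} {ar : L → ℕ}

theorem bisim_refl (G : RGraph L ar) : G.Bisim G :=
  ⟨Eq, fun a a' h => by subst h; exact ⟨rfl, fun i => rfl⟩, rfl⟩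

theorem IsBisim.flip {G G' : RGraph L ar} {R : G.V → G'.V → Prop}
    (h : G.IsBisim G' R) : G'.IsBisim G (fun a' a => R a a') := by
  intro a' a hR
  obtain ⟨hl, hs⟩ := h a a' hR
  refine ⟨hl.symm, fun i => ?_⟩
  have := hs (Fin.cast (congrArg ar hl.symm) i)
  exact this

theorem Bisim.symm {G G' : RGraph L ar} (h : G.Bisim G') : G'.Bisim G := by
  obtain ⟨R, hR, hr⟩ := h
  exact ⟨_, hR.flip, hr⟩

theorem Bisim.trans {G G' G'' : RGraph L ar} (h : G.Bisim G') (h' : G'.Bisim G'') :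
    G.Bisim G'' := by
  obtain ⟨R, hR, hr⟩ := h
  obtain ⟨R', hR', hr'⟩ := h'
  refine ⟨fun a a'' => ∃ a', R a a' ∧ R' a' a'', ?_, G'.root, hr, hr'⟩
  rintro a a'' ⟨a', h1, h2⟩
  obtain ⟨hl1, hs1⟩ := hR a a' h1
  obtain ⟨hl2, hs2⟩ := hR' a' a'' h2
  refine ⟨hl1.trans hl2, fun i => ⟨_, hs1 i, ?_⟩⟩
  have := hs2 (Fin.cast (congrArg ar hl1) i)
  exact this

theorem Iso.bisim {G G' : RGraph L ar} (h : G.Iso G') : G.Bisim G' := by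
  obtain ⟨e, he, hr⟩ := h
  exact ⟨_, he, hr⟩

end RGraph

namespace Fm

theorem fix_congr {G G' : Fm} (e : G = G') {p : ℕ} (h : G.label G.root ≠ .var p)
    (h' : G'.label G'.root ≠ .var p) : G.fix p h = G'.fix p h' := by
  subst e; rfl

theorem snip_eq_snipC {φ : Fm} {p : ℕ} (h : φ.RootOnCycle) : φ.snip p = φ.snipC p := by
  unfold snip; exact if_pos h

theorem iso_fix_snipC (φ : Fm) (p : ℕ) (hp : ¬ φ.Occurs p)
    (h : (φ.snipC p).label (φ.snipC p).root ≠ .var p) :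
    RGraph.Iso ((φ.snipC p).fix p h) φ := by
  classical
  refine ⟨⟨fun x => match x with
    | ⟨some a, _⟩ => a
    | ⟨none, hx⟩ => absurd rfl hx,
    fun a => ⟨some a, fun hc => hp ⟨a, hc⟩⟩, ?_, ?_⟩, ?_, ?_⟩
  · rintro ⟨x, hx⟩
    cases x with
    | none => exact absurd rfl hx
    | some a => rfl
  · intro a; rfl
  · rintro ⟨x, hx⟩ b hb
    cases x with
    | none => exact absurd rfl hx
    | some a =>
      subst hb
      refine ⟨rfl, fun i => ?_⟩
      show _ = φ.succ a i
      by_cases h1 : φ.succ a i = φ.root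
      · have hs : (φ.snipC p).succ (some a) i = none := if_pos h1
        simp only [fix, hs]
        rw [dif_pos (show (φ.snipC p).label none = FLab.var p from rfl), h1]
        rfl
      · have hs : (φ.snipC p).succ (some a) i = some (φ.succ a i) := if_neg h1
        simp only [fix, hs]
        rw [dif_neg (show ¬ (φ.snipC p).label (some (φ.succ a i)) = FLab.var p from fun hc => hp ⟨_, hc⟩)]
        rfl
  · rfl

end Fm

namespace Fm

/- generic cast lemmas -/
theorem cast_label {G H : Fm} (e : G = H) (a : G.V) :
    H.label (cast (congrArg RGraph.V e) a) = G.label a := by subst e; rfl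

theorem cast_root {G H : Fm} (e : G = H) :
    cast (congrArg RGraph.V e) G.root = H.root := by subst e; rfl

theorem cast_succ {G H : Fm} (e : G = H) (a : G.V) (i : Fin (G.label a).ar) :
    cast (congrArg RGraph.V e) (G.succ a i) =
      H.succ (cast (congrArg RGraph.V e) a)
        (Fin.cast (congrArg FLab.ar (cast_label e a).symm) i) := by
  subst e; rfl

theorem varIdx_some {d : FLab} {q : ℕ} (h : varIdx d = some q) : d = .var q := by
  cases d <;> simp_all [varIdx]

/- the substitution for fix-unfolding -/
def fuσ (χ : Fm) (p : ℕ) (h : χ.label χ.root ≠ .var p) : ℕ → Fm :=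
  fun q => if q = p then χ.fix p h else Fm.varFm q

theorem fuσ_p (χ : Fm) (p : ℕ) (h : χ.label χ.root ≠ .var p) :
    fuσ χ p h p = χ.fix p h := if_pos rfl

theorem fuσ_ne (χ : Fm) (p : ℕ) (h : χ.label χ.root ≠ .var p) {q : ℕ} (hq : q ≠ p) :
    fuσ χ p h q = Fm.varFm q := if_neg hq

def fuCast (χ : Fm) (p : ℕ) (h : χ.label χ.root ≠ .var p) {o : Option ℕ}
    (e : o = some p) (c : copyT (fuσ χ p h) o) : (χ.fix p h).V :=
  cast (congrArg RGraph.V (fuσ_p χ p h)) (cast (congrArg (copyT (fuσ χ p h)) e) c)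

theorem fuCast_cast (χ : Fm) (p : ℕ) (h : χ.label χ.root ≠ .var p) {o o' : Option ℕ}
    (e : o = o') (e' : o' = some p) (c : copyT (fuσ χ p h) o) :
    fuCast χ p h e' (cast (congrArg (copyT (fuσ χ p h)) e) c) =
      fuCast χ p h (e.trans e') c := by subst e; rfl

theorem fuCast_root (χ : Fm) (p : ℕ) (h : χ.label χ.root ≠ .var p) {o : Option ℕ}
    (e : o = some p) : fuCast χ p h e (copyRoot (fuσ χ p h) o) = (χ.fix p h).root := by
  subst e
  exact cast_root (fuσ_p χ p h)

def fuR (χ : Fm) (p : ℕ) (h : χ.label χ.root ≠ .var p) :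
    (χ.fix p h).V → (χ.subst (fuσ χ p h)).V → Prop :=
  fun x y => (∃ hne : χ.label y.1 ≠ .var p, x = ⟨y.1, hne⟩) ∨
    (∃ heq : varIdx (χ.label y.1) = some p, x = fuCast χ p h heq y.2)

theorem fu_bisim (χ : Fm) (p : ℕ) (h : χ.label χ.root ≠ .var p) :
    RGraph.IsBisim (χ.fix p h) (χ.subst (fuσ χ p h)) (fuR χ p h) := by
  rintro x ⟨b, c⟩ (⟨hne, rfl⟩ | ⟨heq, rfl⟩)
  · -- left case: x = ⟨b, hne⟩
    suffices H : ∀ (o : Option ℕ) (hE : o = varIdx (χ.label b)) (c : copyT (fuσ χ p h) o),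
        ∃ hl : χ.label b = copyLabel (fuσ χ p h) (χ.label b) o c,
          ∀ i : Fin (χ.label b).ar,
            fuR χ p h ((χ.fix p h).succ ⟨b, hne⟩ i)
              (substSucc χ (fuσ χ p h) b o hE c (Fin.cast (congrArg FLab.ar hl) i)) from
      H _ rfl c
    intro o hE c
    cases o with
    | none =>
      refine ⟨rfl, fun i => ?_⟩
      by_cases hv : χ.label (χ.succ b i) = .var p
      · refine Or.inr ⟨show varIdx (χ.label (χ.succ b i)) = some p by rw [hv]; rfl, ?_⟩
        show (if hb : χ.label (χ.succ b i) = .var p then (⟨χ.root, h⟩ : (χ.fix p h).V)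
          else ⟨χ.succ b i, hb⟩) = _
        rw [dif_pos hv]
        exact (fuCast_root χ p h _).symm
      · refine Or.inl ⟨hv, ?_⟩
        show (if hb : χ.label (χ.succ b i) = .var p then (⟨χ.root, h⟩ : (χ.fix p h).V)
          else ⟨χ.succ b i, hb⟩) = _
        rw [dif_neg hv]
        rfl
    | some q =>
      have hlb : χ.label b = .var q := varIdx_some hE.symm
      have hq : q ≠ p := fun e => hne (by rw [hlb, e])
      refine ⟨?_, fun i => Fin.elim0 (Fin.cast (congrArg FLab.ar hlb) i)⟩
      have h1 : copyLabel (fuσ χ p h) (χ.label b) (some q) c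
          = (varFm q).label (cast (congrArg RGraph.V (fuσ_ne χ p h hq)) c) :=
        (cast_label (fuσ_ne χ p h hq) c).symm
      rw [h1, hlb]
      rfl
  · -- right case: x = fuCast heq c
    suffices H : ∀ (o : Option ℕ) (hE : o = varIdx (χ.label b)) (c : copyT (fuσ χ p h) o),
        ∃ hl : (χ.fix p h).label (fuCast χ p h (hE.trans heq) c) =
            copyLabel (fuσ χ p h) (χ.label b) o c,
          ∀ i : Fin ((χ.fix p h).label (fuCast χ p h (hE.trans heq) c)).ar,
            fuR χ p h ((χ.fix p h).succ (fuCast χ p h (hE.trans heq) c) i)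
              (substSucc χ (fuσ χ p h) b o hE c (Fin.cast (congrArg FLab.ar hl) i)) from
      H _ rfl c
    intro o hE c
    have ho : o = some p := hE.trans heq
    subst ho
    -- now c : copyT (fuσ χ p h) (some p) ≡ (fuσ χ p h p).V
    refine ⟨cast_label (fuσ_p χ p h) c, fun i => ?_⟩
    refine Or.inr ⟨heq, ?_⟩
    show (χ.fix p h).succ (fuCast χ p h (hE.trans heq) c) i
        = fuCast χ p h heq (cast (congrArg (copyT (fuσ χ p h)) hE)
            ((fuσ χ p h p).succ c (Fin.cast (congrArg FLab.ar (cast_label (fuσ_p χ p h) c)) i)))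
    refine Eq.trans ?_ (fuCast_cast χ p h hE heq _).symm
    exact (cast_succ (fuσ_p χ p h) c
      (Fin.cast (congrArg FLab.ar (cast_label (fuσ_p χ p h) c)) i)).symm

end Fm

namespace Fm

/-- lift a family of relations to copies -/
def copyRel {σ σ' : ℕ → Fm} (R : ∀ q, (σ q).V → (σ' q).V → Prop) :
    ∀ o, copyT σ o → copyT σ' o → Prop
  | some q => R q
  | none => fun _ _ => True

theorem copyRel_root {σ σ' : ℕ → Fm} (R : ∀ q, (σ q).V → (σ' q).V → Prop)
    (hr : ∀ q, R q (σ q).root (σ' q).root) (o : Option ℕ) :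
    copyRel R o (copyRoot σ o) (copyRoot σ' o) := by
  cases o with
  | none => trivial
  | some q => exact hr q

theorem copyRel_cast {σ σ' : ℕ → Fm} (R : ∀ q, (σ q).V → (σ' q).V → Prop)
    {o o' : Option ℕ} (e : o = o') (c : copyT σ o) (c' : copyT σ' o)
    (hc : copyRel R o c c') :
    copyRel R o' (cast (congrArg (copyT σ) e) c) (cast (congrArg (copyT σ') e) c') := by
  subst e; exact hc

def subRel (χ : Fm) {σ σ' : ℕ → Fm} (R : ∀ q, (σ q).V → (σ' q).V → Prop) :
    (χ.subst σ).V → (χ.subst σ').V → Prop :=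
  fun x y => ∃ h : x.1 = y.1,
    copyRel R (varIdx (χ.label y.1))
      (cast (congrArg (fun a => copyT σ (varIdx (χ.label a))) h) x.2) y.2

theorem subst_bisim_of (χ : Fm) {σ σ' : ℕ → Fm}
    (R : ∀ q, (σ q).V → (σ' q).V → Prop)
    (hB : ∀ q, RGraph.IsBisim (σ q) (σ' q) (R q))
    (hr : ∀ q, R q (σ q).root (σ' q).root) :
    RGraph.Bisim (χ.subst σ) (χ.subst σ') := by
  refine ⟨subRel χ R, ?_, rfl, copyRel_root R hr _⟩
  rintro ⟨b, c⟩ ⟨b', c'⟩ ⟨hb, hc⟩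
  obtain rfl : b = b' := hb
  replace hc : copyRel R (varIdx (χ.label b)) c c' := hc
  suffices H : ∀ (o : Option ℕ) (hE : o = varIdx (χ.label b)) (c : copyT σ o)
      (c' : copyT σ' o), copyRel R o c c' →
      ∃ hl : copyLabel σ (χ.label b) o c = copyLabel σ' (χ.label b) o c',
        ∀ i : Fin (copyLabel σ (χ.label b) o c).ar,
          subRel χ R (substSucc χ σ b o hE c i)
            (substSucc χ σ' b o hE c' (Fin.cast (congrArg FLab.ar hl) i)) from
    H _ rfl c c' hc
  intro o hE c c' hcc
  cases o with
  | none =>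
    refine ⟨rfl, fun i => ?_⟩
    exact ⟨rfl, copyRel_root R hr _⟩
  | some q =>
    obtain ⟨hl, hs⟩ := hB q c c' hcc
    refine ⟨hl, fun i => ?_⟩
    refine ⟨rfl, ?_⟩
    exact copyRel_cast R hE _ _ (hs i)
end Fm

namespace Fm

theorem snipC_no_out_none (φ : Fm) (p : ℕ) (b : Option φ.V) :
    ¬ (φ.snipC p).Edge none b := by
  rintro ⟨j, hj⟩
  exact Fin.elim0 j

theorem snipC_no_in_root (φ : Fm) (p : ℕ) (x : Option φ.V) :
    ¬ (φ.snipC p).Edge x (some φ.root) := by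
  rintro ⟨j, hj⟩
  cases x with
  | none => exact Fin.elim0 j
  | some a =>
    by_cases hc : φ.succ a j = φ.root
    · rw [show (φ.snipC p).succ (some a) j = none from if_pos hc] at hj
      cases hj
    · rw [show (φ.snipC p).succ (some a) j = some (φ.succ a j) from if_neg hc] at hj
      exact hc (Option.some.inj hj)

theorem snipC_edge_some {φ : Fm} {p : ℕ} {a b : φ.V}
    (h : (φ.snipC p).Edge (some a) (some b)) : φ.Edge a b := by
  obtain ⟨j, hj⟩ := h
  by_cases hc : φ.succ a j = φ.root
  · rw [show (φ.snipC p).succ (some a) j = none from if_pos hc] at hj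
    cases hj
  · rw [show (φ.snipC p).succ (some a) j = some (φ.succ a j) from if_neg hc] at hj
    exact ⟨j, Option.some.inj hj⟩

theorem snipC_cycle {φ : Fm} {p : ℕ} {C : Set (Option φ.V)}
    (hC : (φ.snipC p).IsCycle C) :
    φ.IsCycle (some ⁻¹' C) ∧ C = some '' (some ⁻¹' C) ∧ some φ.root ∉ C := by
  obtain ⟨k, f, hinj, hrange, hedge, hclose⟩ := hC
  -- every vertex on the cycle has an outgoing edge
  have hout : ∀ i : Fin (k + 1), ∃ b, (φ.snipC p).Edge (f i) b := by
    intro i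
    by_cases hi : i = Fin.last k
    · exact ⟨f 0, hi ▸ hclose⟩
    · obtain ⟨j, rfl⟩ := Fin.exists_castSucc_eq.mpr hi
      exact ⟨f j.succ, hedge j⟩
  have hsome : ∀ i, (f i).isSome := by
    intro i
    cases hfi : f i with
    | none =>
      obtain ⟨b, hb⟩ := hout i
      rw [hfi] at hb
      exact absurd hb (snipC_no_out_none φ p b)
    | some a => rfl
  set g : Fin (k + 1) → φ.V := fun i => (f i).get (hsome i) with hg
  have hgf : ∀ i, f i = some (g i) := fun i => (Option.some_get (hsome i)).symm
  have hginj : Function.Injective g := by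
    intro i j hij
    apply hinj
    rw [hgf i, hgf j, hij]
  have hedge' : ∀ i : Fin k, φ.Edge (g i.castSucc) (g i.succ) := by
    intro i
    apply snipC_edge_some (p := p)
    rw [← hgf, ← hgf]
    exact hedge i
  have hclose' : φ.Edge (g (Fin.last k)) (g 0) := by
    apply snipC_edge_some (p := p)
    rw [← hgf, ← hgf]
    exact hclose
  have hpre : Set.range g = some ⁻¹' C := by
    ext a
    constructor
    · rintro ⟨i, rfl⟩
      show some (g i) ∈ C
      rw [← hgf, ← hrange]
      exact ⟨i, rfl⟩
    · intro ha
      have : some a ∈ Set.range f := hrange ▸ ha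
      obtain ⟨i, hi⟩ := this
      refine ⟨i, ?_⟩
      have := (hgf i).symm.trans hi
      exact Option.some.inj this
  refine ⟨⟨k, g, hginj, hpre, hedge', hclose'⟩, ?_, ?_⟩
  · ext x
    constructor
    · intro hx
      obtain ⟨i, rfl⟩ := hrange ▸ hx
      exact ⟨g i, by rw [← hpre]; exact ⟨i, rfl⟩, (hgf i).symm⟩
    · rintro ⟨a, ha, rfl⟩
      exact ha
  · intro hx
    obtain ⟨i, hi⟩ := hrange ▸ hx
    -- f i = some φ.root has an incoming edge
    by_cases hi0 : i = 0
    · subst hi0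
      rw [hi] at hclose
      exact snipC_no_in_root φ p _ hclose
    · obtain ⟨j, rfl⟩ := Fin.exists_succ_eq_of_ne_zero hi0
      have := hedge j
      rw [hi] at this
      exact snipC_no_in_root φ p _ this

theorem numCycles_snipC_lt (φ : Fm) (p : ℕ) (hroot : φ.RootOnCycle) :
    (φ.snipC p).numCycles < φ.numCycles := by
  classical
  haveI := φ.fin
  obtain ⟨C₀, hC₀, hr₀⟩ := hroot
  have hinj : Set.InjOn (fun C : Set (Option φ.V) => some ⁻¹' C)
      {C | (φ.snipC p).IsCycle C} := by
    intro C hC D hD hCD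
    rw [(snipC_cycle hC).2.1, (snipC_cycle hD).2.1]
    simp only at hCD
    rw [hCD]
  have himg : (fun C : Set (Option φ.V) => some ⁻¹' C) '' {C | (φ.snipC p).IsCycle C}
      ⊆ {C | φ.IsCycle C} := by
    rintro _ ⟨C, hC, rfl⟩
    exact (snipC_cycle hC).1
  have hnot : C₀ ∉ (fun C : Set (Option φ.V) => some ⁻¹' C) '' {C | (φ.snipC p).IsCycle C} := by
    rintro ⟨C, hC, hCe⟩
    apply (snipC_cycle hC).2.2
    show φ.root ∈ some ⁻¹' C
    rw [show (some ⁻¹' C : Set φ.V) = C₀ from hCe]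
    exact hr₀
  calc Set.ncard {C | (φ.snipC p).IsCycle C}
      = Set.ncard ((fun C : Set (Option φ.V) => some ⁻¹' C) '' {C | (φ.snipC p).IsCycle C}) :=
        (Set.ncard_image_of_injOn hinj).symm
    _ < Set.ncard {C | φ.IsCycle C} := by
        apply Set.ncard_lt_ncard
        · exact ⟨himg, fun hle => hnot (hle hC₀)⟩
        · exact Set.toFinite _

end Fm

namespace Fm

theorem fix_unfold (χ : Fm) (p : ℕ) (h : χ.label χ.root ≠ .var p) :
    RGraph.Bisim (χ.fix p h) (χ.subst1 p (χ.fix p h)) :=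
  ⟨fuR χ p h, fu_bisim χ p h, Or.inl ⟨h, rfl⟩⟩

theorem subst_bisim (χ : Fm) (σ σ' : ℕ → Fm) (h : ∀ q, RGraph.Bisim (σ q) (σ' q)) :
    RGraph.Bisim (χ.subst σ) (χ.subst σ') := by
  choose R hB hr using h
  exact subst_bisim_of χ R hB hr

end Fm

/-- Lemma `flashssmurf`: suppose the root of `φ` is a cycle vertex, `p`
does not occur in `φ` and `p` is modalised in `ψ`.  Then
(i) `c(snip(φ,p)) < c(φ)`;
(ii) `Ϝp.snip(φ,p) ≅ φ`;
(iii) `snip(φ,φ) ≃ φ`;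
(iv) `Ϝp.ψ ≃ ψ[p:Ϝp.ψ]`. -/
theorem snip_fix_props (φ ψ : Fm) (p : ℕ)
    (hφ : φ.WF) (hψ : ψ.WF)
    (hroot : φ.RootOnCycle) (hp : ¬ φ.Occurs p) (hmod : ψ.Modalised p) :
    (φ.snip p).numCycles < φ.numCycles ∧
    RGraph.Iso ((φ.snip p).fix p (Fm.snip_root_ne hroot hp)) φ ∧
    RGraph.Bisim (φ.snipF p φ) φ ∧
    RGraph.Bisim (ψ.fix p hmod.root_ne) (ψ.subst1 p (ψ.fix p hmod.root_ne)) := by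
  have hC : (φ.snipC p).label (φ.snipC p).root ≠ .var p := fun hc => hp ⟨φ.root, hc⟩
  have h2 : RGraph.Iso ((φ.snip p).fix p (Fm.snip_root_ne hroot hp)) φ := by
    rw [Fm.fix_congr (Fm.snip_eq_snipC hroot) _ hC]
    exact Fm.iso_fix_snipC φ p hp hC
  refine ⟨?_, h2, ?_, Fm.fix_unfold ψ p hmod.root_ne⟩
  · rw [Fm.snip_eq_snipC hroot]
    exact Fm.numCycles_snipC_lt φ p hroot
  · set χ := φ.snip p with hχ
    set Fx := χ.fix p (Fm.snip_root_ne hroot hp) with hFx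
    have b1 : RGraph.Bisim Fx (χ.subst1 p Fx) := Fm.fix_unfold χ p _
    have b2 : RGraph.Bisim Fx φ := h2.bisim
    have b3 : RGraph.Bisim (χ.subst1 p φ) (χ.subst1 p Fx) := by
      apply Fm.subst_bisim
      intro q
      by_cases hq : q = p
      · subst hq
        simp only [if_pos rfl]
        exact b2.symm
      · simp only [if_neg hq]
        exact RGraph.bisim_refl _
    exact b3.trans (b1.symm.trans b2)
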